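/- Fix r1, r2 with u1(r1) > 0 and u2(r2) > 0, let γ > −1, M > 0, and N, c1, c2 ∈ ℝ. Then the map p ↦ G_s(r1, r2, p) attains its maximum over the set {p : p ≥ 0} at p* = (1+γ)·√(2·u1(r1)·u2(r2)/(3·(1 + 2·γ²))). -/

import Mathlib

/-- Substitutes bundling profit
G_s(r1, r2, p) = M·p·(1 − (1/2 + γ²)·p²/((1+γ)²·u1(r1)·u2(r2))) − N·c1·(1−r1) − N·c2·(1−r2),
with u1(r1) = α1 − α2·exp(α3·r1) and u2(r2) = β1 − β2·exp(β3·r2). -/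
noncomputable def Gs (M N c1 c2 α1 α2 α3 β1 β2 β3 γ : ℝ) (r1 r2 p : ℝ) : ℝ :=
  M * p * (1 - (1 / 2 + γ ^ 2) * p ^ 2 /
      ((1 + γ) ^ 2 * (α1 - α2 * Real.exp (α3 * r1)) * (β1 - β2 * Real.exp (β3 * r2)))) -
    N * c1 * (1 - r1) - N * c2 * (1 - r2)

/-- With fixed privacy levels, the substitutes bundling profit p ↦ G_s(r1, r2, p) attains
its maximum over {p : p ≥ 0} at p* = (1+γ)·√(2·u1(r1)·u2(r2)/(3·(1 + 2·γ²))). -/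
theorem substitutes_fixed_privacy_optimal_fee (M N c1 c2 α1 α2 α3 β1 β2 β3 γ r1 r2 pstar : ℝ)
    (hM : 0 < M) (hγ : -1 < γ)
    (hu1 : 0 < α1 - α2 * Real.exp (α3 * r1)) (hu2 : 0 < β1 - β2 * Real.exp (β3 * r2))
    (hps : pstar = (1 + γ) *
      Real.sqrt (2 * (α1 - α2 * Real.exp (α3 * r1)) * (β1 - β2 * Real.exp (β3 * r2)) /
        (3 * (1 + 2 * γ ^ 2)))) :
    0 ≤ pstar ∧
    ∀ p : ℝ, 0 ≤ p →
      Gs M N c1 c2 α1 α2 α3 β1 β2 β3 γ r1 r2 p ≤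
      Gs M N c1 c2 α1 α2 α3 β1 β2 β3 γ r1 r2 pstar := by
  set u1 : ℝ := α1 - α2 * Real.exp (α3 * r1) with hu1def
  set u2 : ℝ := β1 - β2 * Real.exp (β3 * r2) with hu2def
  have hg : (0:ℝ) < 1 + γ := by linarith
  have hd : (0:ℝ) < 3 * (1 + 2 * γ ^ 2) := by nlinarith [sq_nonneg γ]
  have harg : 0 ≤ 2 * u1 * u2 / (3 * (1 + 2 * γ ^ 2)) := by positivity
  have hps0 : 0 ≤ pstar := by
    rw [hps]; positivity
  refine ⟨hps0, ?_⟩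
  have hq2 : pstar ^ 2 = (1 + γ) ^ 2 * (2 * u1 * u2 / (3 * (1 + 2 * γ ^ 2))) := by
    rw [hps, mul_pow, Real.sq_sqrt harg]
  set c : ℝ := 1 / 2 + γ ^ 2 with hc
  set A : ℝ := (1 + γ) ^ 2 * u1 * u2 with hA
  have hcpos : (0:ℝ) < c := by positivity
  have hApos : (0:ℝ) < A := by positivity
  have hkey : 3 * c * pstar ^ 2 = A := by
    rw [hq2]
    field_simp
    ring
  intro p hp
  unfold Gs
  have h1 : p * (A - c * p ^ 2) ≤ pstar * (A - c * pstar ^ 2) := by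
    nlinarith [mul_nonneg (mul_nonneg hcpos.le (sq_nonneg (pstar - p)))
      (by linarith : (0:ℝ) ≤ p + 2 * pstar)]
  have h2 : M * (p * (A - c * p ^ 2)) ≤ M * (pstar * (A - c * pstar ^ 2)) :=
    mul_le_mul_of_nonneg_left h1 hM.le
  have h3 : M * (p * (A - c * p ^ 2)) / A ≤ M * (pstar * (A - c * pstar ^ 2)) / A := by
    gcongr
  have heq : ∀ q : ℝ, M * q * (1 - c * q ^ 2 / A) = M * (q * (A - c * q ^ 2)) / A := by
    intro q; field_simp
  have := heq p
  have := heq pstar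
  simp only [hA, hc] at *
  linarith
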